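/- arXiv:1712.02130 — 2 statements merged into one kernel-verified Lean document; each statement's English description precedes it below -/
import Mathlib

section
/- Let N_{αβμν} (α,β,μ,ν∈{0,1,2}) be real coefficients satisfying the symmetry condition and the null condition. There exists a constant C>0, depending only on the coefficients, such that for every multi-index a, every sufficiently smooth (C^{|a|+3}) real-valued function u defined near a point (t,x)∈ℝ^{1+2} with t≥0 and |x|≥1, the quantity F₁(u) := Σ N_{αβμν} ∂_α Γ^a u · ∂_β Γ^a u · ∂_μ∂_ν u satisfies |F₁(u)(t,x)| ≤ C [ Σ_{i=1,2} |((ω_i∂_t+∂_i)Γ^a u)| · |∂Γ^a u| · |∂²u| + (1/|x|)·|∂_tΓ^a u|²·(|∂Γu| + |∂u|) ](t,x). -/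
noncomputable section

open MeasureTheory Real Set

/-- Partial derivative in coordinate direction `i` on space-time `ℝ³`
(coordinate `0` is time, coordinates `1, 2` are space). -/
def pd (i : Fin 3) (u : (Fin 3 → ℝ) → ℝ) : (Fin 3 → ℝ) → ℝ :=
  fun X => fderiv ℝ u X (Pi.single i 1)

/-- The d'Alembertian `□ = ∂_t² - ∂₁² - ∂₂²`. -/
def box (u : (Fin 3 → ℝ) → ℝ) : (Fin 3 → ℝ) → ℝ :=
  fun X => pd 0 (pd 0 u) X - pd 1 (pd 1 u) X - pd 2 (pd 2 u) X

/-- The seven Klainerman vector fields `Γ = (∂_t, ∂₁, ∂₂, Ω, L₁, L₂, S̃)`. -/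
def Gamma (i : Fin 7) (u : (Fin 3 → ℝ) → ℝ) : (Fin 3 → ℝ) → ℝ :=
  if i = 0 then pd 0 u
  else if i = 1 then pd 1 u
  else if i = 2 then pd 2 u
  else if i = 3 then fun X => -(X 2) * pd 1 u X + X 1 * pd 2 u X
  else if i = 4 then fun X => X 0 * pd 1 u X + X 1 * pd 0 u X
  else if i = 5 then fun X => X 0 * pd 2 u X + X 2 * pd 0 u X
  else fun X => X 0 * pd 0 u X + X 1 * pd 1 u X + X 2 * pd 2 u X - 2 * u X

/-- `Γ^a` for a multi-index `a = (a₁,…,a₇) ∈ ℕ⁷`. -/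
def GammaPow (a : Fin 7 → ℕ) (u : (Fin 3 → ℝ) → ℝ) : (Fin 3 → ℝ) → ℝ :=
  (Gamma 0)^[a 0] <| (Gamma 1)^[a 1] <| (Gamma 2)^[a 2] <| (Gamma 3)^[a 3] <|
    (Gamma 4)^[a 4] <| (Gamma 5)^[a 5] <| (Gamma 6)^[a 6] u

/-- The point `(t, x) ∈ ℝ^{1+2}`. -/
def pt (t : ℝ) (x : ℝ × ℝ) : Fin 3 → ℝ := ![t, x.1, x.2]

/-- `|∂v|²` at a point. -/
def pdSq (v : (Fin 3 → ℝ) → ℝ) (X : Fin 3 → ℝ) : ℝ :=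
  (pd 0 v X) ^ 2 + (pd 1 v X) ^ 2 + (pd 2 v X) ^ 2

/-- The spatial radius `r = |x|` of a space-time point. -/
def rad (X : Fin 3 → ℝ) : ℝ := Real.sqrt ((X 1) ^ 2 + (X 2) ^ 2)

/-- Multi-indices `a ∈ ℕ⁷` with `|a| ≤ k`. -/
def multiIndex7 (k : ℕ) : Finset (Fin 7 → ℕ) :=
  (Fintype.piFinset fun _ => Finset.range (k + 1)).filter fun a => ∑ i, a i ≤ k

/-- The generalized energy `E_k(u(t)) = (1/2) ∑_{|a| ≤ k-1} ∫ |∂Γ^a u|² dx`. -/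
def energy (k : ℕ) (u : (Fin 3 → ℝ) → ℝ) (t : ℝ) : ℝ :=
  (1 / 2) * ∑ a ∈ multiIndex7 (k - 1), ∫ x : ℝ × ℝ, pdSq (GammaPow a u) (pt t x)

/-- Partial derivatives on the plane `ℝ²`. -/
def pdx (i : Fin 2) (f : ℝ × ℝ → ℝ) : ℝ × ℝ → ℝ :=
  fun x => fderiv ℝ f x (if i = 0 then (1, 0) else (0, 1))

/-- The fields `Λ = (∂₁, ∂₂, r∂_r, Ω)` on `ℝ²`. -/
def Lam (i : Fin 4) (f : ℝ × ℝ → ℝ) : ℝ × ℝ → ℝ :=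
  if i = 0 then pdx 0 f
  else if i = 1 then pdx 1 f
  else if i = 2 then fun x => x.1 * pdx 0 f x + x.2 * pdx 1 f x
  else fun x => -x.2 * pdx 0 f x + x.1 * pdx 1 f x

/-- `Λ^a` for a multi-index `a ∈ ℕ⁴`. -/
def LamPow (a : Fin 4 → ℕ) (f : ℝ × ℝ → ℝ) : ℝ × ℝ → ℝ :=
  (Lam 0)^[a 0] <| (Lam 1)^[a 1] <| (Lam 2)^[a 2] <| (Lam 3)^[a 3] f

/-- Multi-indices `a ∈ ℕ⁴` with `|a| ≤ k`. -/
def multiIndex4 (k : ℕ) : Finset (Fin 4 → ℕ) :=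
  (Fintype.piFinset fun _ => Finset.range (k + 1)).filter fun a => ∑ i, a i ≤ k

/-- The `L²(ℝ²)` norm. -/
def L2 (f : ℝ × ℝ → ℝ) : ℝ := (eLpNorm f 2 volume).toReal

/-- `|∇f|` for a function on `ℝ²`. -/
def gradAbs (f : ℝ × ℝ → ℝ) : ℝ × ℝ → ℝ :=
  fun x => Real.sqrt ((pdx 0 f x) ^ 2 + (pdx 1 f x) ^ 2)

/-- Membership `(f, g) ∈ H^k_Λ`. -/
def MemHLam (k : ℕ) (f g : ℝ × ℝ → ℝ) : Prop :=
  ∀ a ∈ multiIndex4 (k - 1),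
    MemLp (LamPow a f) 2 (volume : Measure (ℝ × ℝ)) ∧
    MemLp (gradAbs (LamPow a f)) 2 (volume : Measure (ℝ × ℝ)) ∧
    MemLp (LamPow a g) 2 (volume : Measure (ℝ × ℝ))

/-- The norm `‖(f, g)‖_{H^k_Λ} = ∑_{|a| ≤ k-1} (‖∇Λ^a f‖_{L²} + ‖Λ^a g‖_{L²})`. -/
def HLamNorm (k : ℕ) (f g : ℝ × ℝ → ℝ) : ℝ :=
  ∑ a ∈ multiIndex4 (k - 1), (L2 (gradAbs (LamPow a f)) + L2 (LamPow a g))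

/-- The Japanese bracket `⟨t⟩ = √(1 + t²)`. -/
def jb (t : ℝ) : ℝ := Real.sqrt (1 + t ^ 2)

/-- The null condition for the coefficients `N_{αβμν}`. -/
def NullCond (N : Fin 3 → Fin 3 → Fin 3 → Fin 3 → ℝ) : Prop :=
  ∀ X : Fin 3 → ℝ, (X 0) ^ 2 = (X 1) ^ 2 + (X 2) ^ 2 →
    ∑ α : Fin 3, ∑ β : Fin 3, ∑ μ : Fin 3, ∑ ν : Fin 3,
      N α β μ ν * X α * X β * X μ * X ν = 0

/-- The symmetry condition `N_{αβμν} = N_{βαμν} = N_{αβνμ}`. -/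
def SymCond (N : Fin 3 → Fin 3 → Fin 3 → Fin 3 → ℝ) : Prop :=
  ∀ α β μ ν, N α β μ ν = N β α μ ν ∧ N α β μ ν = N α β ν μ

/-- The quadratic nonlinearity `N(u, v) = ∑ N_{αβμν} ∂_α∂_β u ∂_μ∂_ν v`. -/
def NL (N : Fin 3 → Fin 3 → Fin 3 → Fin 3 → ℝ) (u v : (Fin 3 → ℝ) → ℝ) :
    (Fin 3 → ℝ) → ℝ :=
  fun X => ∑ α : Fin 3, ∑ β : Fin 3, ∑ μ : Fin 3, ∑ ν : Fin 3,
    N α β μ ν * pd α (pd β u) X * pd μ (pd ν v) X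

/-- A global classical solution of `□u = N(u, u)` on `[0, ∞) × ℝ²` with data `(φ, ψ)`. -/
def IsGlobalSolution (N : Fin 3 → Fin 3 → Fin 3 → Fin 3 → ℝ)
    (φ ψ : ℝ × ℝ → ℝ) (u : (Fin 3 → ℝ) → ℝ) : Prop :=
  ContDiff ℝ 2 u ∧
  (∀ X : Fin 3 → ℝ, 0 ≤ X 0 → box u X = NL N u u X) ∧
  (∀ x : ℝ × ℝ, u (pt 0 x) = φ x ∧ pd 0 u (pt 0 x) = ψ x)

/-- The quadratic nonlinearity `∑ N_{μδ} ∂_μ v ∂_δ v` of the quasilinear equation. -/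
def QNL (N : Fin 3 → Fin 3 → ℝ) (v : (Fin 3 → ℝ) → ℝ) : (Fin 3 → ℝ) → ℝ :=
  fun X => ∑ μ : Fin 3, ∑ δ : Fin 3, N μ δ * pd μ v X * pd δ v X

/-- The null condition for the coefficients `N_{μδ}`. -/
def NullCond2 (N : Fin 3 → Fin 3 → ℝ) : Prop :=
  ∀ X : Fin 3 → ℝ, (X 0) ^ 2 = (X 1) ^ 2 + (X 2) ^ 2 →
    ∑ μ : Fin 3, ∑ δ : Fin 3, N μ δ * X μ * X δ = 0

/-- A global classical solution of `□v = ∑ A_l ∂_l (∑ N_{μδ} ∂_μ v ∂_δ v)` with data `(v₀, v₁)`. -/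
def IsGlobalQSolution (A : Fin 3 → ℝ) (N : Fin 3 → Fin 3 → ℝ)
    (v₀ v₁ : ℝ × ℝ → ℝ) (v : (Fin 3 → ℝ) → ℝ) : Prop :=
  ContDiff ℝ 2 v ∧
  (∀ X : Fin 3 → ℝ, 0 ≤ X 0 → box v X = ∑ l : Fin 3, A l * pd l (QNL N v) X) ∧
  (∀ x : ℝ × ℝ, v (pt 0 x) = v₀ x ∧ pd 0 v (pt 0 x) = v₁ x)


/-- `|∂v|` at a point. -/
def absPd (v : (Fin 3 → ℝ) → ℝ) (X : Fin 3 → ℝ) : ℝ := Real.sqrt (pdSq v X)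

/-- `|∂Γu|` at a point: the sum over the seven fields `Γ'` of `|∂Γ'u|`. -/
def absPdGam (u : (Fin 3 → ℝ) → ℝ) (X : Fin 3 → ℝ) : ℝ :=
  ∑ i : Fin 7, absPd (Gamma i u) X

/-- `|∂²u|` at a point: the Euclidean norm of all second-order space-time derivatives. -/
def absPd2 (u : (Fin 3 → ℝ) → ℝ) (X : Fin 3 → ℝ) : ℝ :=
  Real.sqrt (∑ i : Fin 3, ∑ j : Fin 3, (pd i (pd j u) X) ^ 2)

/-!
Let `η = (1, -ω)`, a null vector. Writing `∂Γ^a u = g + η ∂_tΓ^a u` and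
`∂_μ∂_ν u = Q_μν + η_μ ∂_t∂_ν u`, where `g` and `Q` consist of the good derivatives
`ω_i ∂_t + ∂_i`, and using the symmetry of `∂²u` once more on `∂_t∂_ν u`, every term of `F₁`
contains a good derivative except `(∂_tΓ^a u)² ∂_t²u ∑ N η η η η`, which vanishes by the null
condition. For `t ≥ 0` the good derivatives are combinations of `S, L₁, L₂, Ω` with coefficients
of size `1/r`, and commuting `∂` past any `Γ` (an affine vector field) costs only `|∂u|`; hence
the good derivatives of `∂u` are `O((|∂Γu| + |∂u|)/r)`.
-/

open Matrix

-- `open Real` makes `Gamma` ambiguous with `Real.Gamma`.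
local notation "Γ" => (_root_.Gamma)

section

variable {u : (Fin 3 → ℝ) → ℝ} {X : Fin 3 → ℝ}

theorem fderiv_apply_eq_sum_pd (u : (Fin 3 → ℝ) → ℝ) (X w : Fin 3 → ℝ) :
    fderiv ℝ u X w = ∑ k, w k * pd k u X := by
  conv_lhs => rw [pi_eq_sum_univ' w]
  simp [pd]

theorem absPd_nonneg (v : (Fin 3 → ℝ) → ℝ) (X : Fin 3 → ℝ) : 0 ≤ absPd v X :=
  Real.sqrt_nonneg _

theorem absPdGam_nonneg (u : (Fin 3 → ℝ) → ℝ) (X : Fin 3 → ℝ) : 0 ≤ absPdGam u X :=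
  Finset.sum_nonneg fun i _ => absPd_nonneg (Γ i u) X

theorem absPd2_nonneg (u : (Fin 3 → ℝ) → ℝ) (X : Fin 3 → ℝ) : 0 ≤ absPd2 u X :=
  Real.sqrt_nonneg _

theorem abs_pd_le (v : (Fin 3 → ℝ) → ℝ) (X : Fin 3 → ℝ) (ν : Fin 3) :
    |pd ν v X| ≤ absPd v X := by
  refine abs_le_of_sq_le_sq ?_ (absPd_nonneg v X)
  rw [absPd, Real.sq_sqrt (by unfold pdSq; positivity), pdSq]
  fin_cases ν <;> simp <;>
    nlinarith [sq_nonneg (pd 0 v X), sq_nonneg (pd 1 v X), sq_nonneg (pd 2 v X)]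

theorem abs_fderiv_apply_le (u : (Fin 3 → ℝ) → ℝ) (X w : Fin 3 → ℝ) :
    |fderiv ℝ u X w| ≤ (∑ k, |w k|) * absPd u X := by
  rw [fderiv_apply_eq_sum_pd, Finset.sum_mul]
  refine (Finset.abs_sum_le_sum_abs _ _).trans (Finset.sum_le_sum fun k _ => ?_)
  rw [abs_mul]
  exact mul_le_mul_of_nonneg_left (abs_pd_le u X k) (abs_nonneg _)

theorem abs_pd_pd_le (u : (Fin 3 → ℝ) → ℝ) (X : Fin 3 → ℝ) (μ ν : Fin 3) :
    |pd μ (pd ν u) X| ≤ absPd2 u X := by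
  refine abs_le_of_sq_le_sq ?_ (absPd2_nonneg u X)
  rw [absPd2, Real.sq_sqrt (by positivity)]
  calc pd μ (pd ν u) X ^ 2 ≤ ∑ j, pd μ (pd j u) X ^ 2 :=
        Finset.single_le_sum (f := fun j => pd μ (pd j u) X ^ 2) (fun _ _ => sq_nonneg _)
          (Finset.mem_univ ν)
    _ ≤ ∑ i, ∑ j, pd i (pd j u) X ^ 2 :=
        Finset.single_le_sum (f := fun i => ∑ j, pd i (pd j u) X ^ 2)
          (fun _ _ => by positivity) (Finset.mem_univ μ)

theorem differentiableAt_fderiv_of_contDiffAt (hu : ContDiffAt ℝ 2 u X) :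
    DifferentiableAt ℝ (fderiv ℝ u) X :=
  (hu.fderiv_right (m := 1) (by norm_num)).differentiableAt one_ne_zero

theorem fderiv_pd_apply (hu : ContDiffAt ℝ 2 u X) (ν : Fin 3) (w : Fin 3 → ℝ) :
    fderiv ℝ (pd ν u) X w = fderiv ℝ (fderiv ℝ u) X w (Pi.single ν 1) := by
  show fderiv ℝ (fun Y => fderiv ℝ u Y (Pi.single ν 1)) X w = _
  rw [fderiv_clm_apply (differentiableAt_fderiv_of_contDiffAt hu) (differentiableAt_const _)]
  simp

theorem pd_pd_comm (hu : ContDiffAt ℝ 2 u X) (μ ν : Fin 3) :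
    pd μ (pd ν u) X = pd ν (pd μ u) X := by
  rw [pd, fderiv_pd_apply hu, pd, fderiv_pd_apply hu]
  exact (hu.isSymmSndFDerivAt (by simp)).eq _ _

def affineField (A : Matrix (Fin 3) (Fin 3) ℝ) (b : Fin 3 → ℝ) (c : ℝ)
    (u : (Fin 3 → ℝ) → ℝ) : (Fin 3 → ℝ) → ℝ :=
  fun Y => fderiv ℝ u Y (A *ᵥ Y + b) + c * u Y

-- The symmetry of the Hessian cancels the second-order terms, leaving `∂_ν` of the coefficient.
theorem pd_affineField (hu : ContDiffAt ℝ 2 u X) (A : Matrix (Fin 3) (Fin 3) ℝ)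
    (b : Fin 3 → ℝ) (c : ℝ) (ν : Fin 3) :
    pd ν (affineField A b c u) X
      = affineField A b c (pd ν u) X + fderiv ℝ u X (A.col ν) := by
  have hV : HasFDerivAt (fun Y => A *ᵥ Y + b)
      (Matrix.mulVecLin A).toContinuousLinearMap X :=
    (Matrix.mulVecLin A).toContinuousLinearMap.hasFDerivAt.add_const b
  have hD := ((differentiableAt_fderiv_of_contDiffAt hu).hasFDerivAt.clm_apply hV).fun_add
    ((hu.differentiableAt two_ne_zero).hasFDerivAt.const_mul c)
  have hfd : fderiv ℝ (affineField A b c u) X = _ := hD.fderiv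
  rw [pd, hfd]
  have hsymm := hu.isSymmSndFDerivAt (by simp)
  simp only [affineField, fderiv_pd_apply hu, hsymm.eq (A *ᵥ X + b), pd]
  simp
  ring

theorem exists_Gamma_eq_affineField (i : Fin 7) :
    ∃ (A : Matrix (Fin 3) (Fin 3) ℝ) (b : Fin 3 → ℝ) (c : ℝ),
      Γ i = affineField A b c ∧ ∀ ν, ∑ k, |A k ν| ≤ 1 := by
  fin_cases i <;> [
    refine ⟨0, Pi.single 0 1, 0, ?_, ?_⟩;
    refine ⟨0, Pi.single 1 1, 0, ?_, ?_⟩;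
    refine ⟨0, Pi.single 2 1, 0, ?_, ?_⟩;
    refine ⟨!![0, 0, 0; 0, 0, -1; 0, 1, 0], 0, 0, ?_, ?_⟩;
    refine ⟨!![0, 1, 0; 1, 0, 0; 0, 0, 0], 0, 0, ?_, ?_⟩;
    refine ⟨!![0, 0, 1; 0, 0, 0; 1, 0, 0], 0, 0, ?_, ?_⟩;
    refine ⟨!![1, 0, 0; 0, 1, 0; 0, 0, 1], 0, -2, ?_, ?_⟩]
  all_goals first
    | intro ν; fin_cases ν <;> simp [Fin.sum_univ_three]
    | funext u Y
      simp [_root_.Gamma, affineField, fderiv_apply_eq_sum_pd, Fin.sum_univ_three, dotProduct] <;>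
        ring

theorem abs_pd_Gamma_sub_Gamma_pd_le (hu : ContDiffAt ℝ 2 u X) (i : Fin 7) (ν : Fin 3) :
    |pd ν (Γ i u) X - Γ i (pd ν u) X| ≤ absPd u X := by
  obtain ⟨A, b, c, hΓ, hA⟩ := exists_Gamma_eq_affineField i
  rw [hΓ, pd_affineField hu, add_sub_cancel_left]
  exact (abs_fderiv_apply_le u X _).trans (mul_le_of_le_one_left (absPd_nonneg u X) (hA ν))

theorem abs_good_deriv_le {t r a b p₀ p₁ p₂ : ℝ} (ht : 0 ≤ t) (hr : 0 < r)
    (hab : r ^ 2 = a ^ 2 + b ^ 2) :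
    |a / r * p₀ + p₁| ≤ (|t * p₀ + a * p₁ + b * p₂| + |t * p₁ + a * p₀| + |t * p₂ + b * p₀|
      + |a * p₂ - b * p₁|) / r := by
  set S := t * p₀ + a * p₁ + b * p₂
  set L₁ := t * p₁ + a * p₀
  set L₂ := t * p₂ + b * p₀
  set Ω := a * p₂ - b * p₁
  have hω₁ : |a / r| ≤ 1 := by
    rw [abs_div, abs_of_pos hr]
    exact div_le_one_of_le₀ (abs_le_of_sq_le_sq (by nlinarith) hr.le) hr.le
  have hω₂ : |b / r| ≤ 1 := by
    rw [abs_div, abs_of_pos hr]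
    exact div_le_one_of_le₀ (abs_le_of_sq_le_sq (by nlinarith) hr.le) hr.le
  have key : a / r * p₀ + p₁
      = (a / r * S + (a / r) ^ 2 * L₁ + a / r * (b / r) * L₂) / (t + r) - b / r * Ω / r := by
    field_simp
    linear_combination (a * p₀ + (t + r) * p₁) * hab
  have hS : |a / r * S + (a / r) ^ 2 * L₁ + a / r * (b / r) * L₂| ≤ |S| + |L₁| + |L₂| := by
    refine (abs_add_three _ _ _).trans (add_le_add_three ?_ ?_ ?_) <;> rw [abs_mul]
    · exact mul_le_of_le_one_left (abs_nonneg _) hω₁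
    · rw [abs_pow]
      exact mul_le_of_le_one_left (abs_nonneg _) (pow_le_one₀ (abs_nonneg _) hω₁)
    · rw [abs_mul]
      exact mul_le_of_le_one_left (abs_nonneg _) (mul_le_one₀ hω₁ (abs_nonneg _) hω₂)
  calc |a / r * p₀ + p₁|
      ≤ (|S| + |L₁| + |L₂|) / (t + r) + |Ω| / r := by
        rw [key]
        refine (abs_sub _ _).trans (add_le_add ?_ ?_)
        · rw [abs_div, abs_of_pos (show 0 < t + r by linarith)]
          exact div_le_div_of_nonneg_right hS (by linarith)
        · rw [abs_div, abs_mul, abs_of_pos hr]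
          exact div_le_div_of_nonneg_right (mul_le_of_le_one_left (abs_nonneg _) hω₂) hr.le
    _ ≤ (|S| + |L₁| + |L₂|) / r + |Ω| / r := by gcongr; linarith
    _ = _ := by ring

theorem rad_sq (X : Fin 3 → ℝ) : rad X ^ 2 = X 1 ^ 2 + X 2 ^ 2 :=
  Real.sq_sqrt (by positivity)

def nullDir (X : Fin 3 → ℝ) : Fin 3 → ℝ := ![1, -(X 1 / rad X), -(X 2 / rad X)]

theorem nullDir_sq (hr : rad X ≠ 0) :
    nullDir X 0 ^ 2 = nullDir X 1 ^ 2 + nullDir X 2 ^ 2 := by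
  have := rad_sq X
  simp only [nullDir]
  simp [div_pow]
  field_simp
  linarith

theorem abs_nullDir_le (X : Fin 3 → ℝ) (α : Fin 3) : |nullDir X α| ≤ 1 := by
  have hr : 0 ≤ rad X := Real.sqrt_nonneg _
  have h (i : Fin 3) (hi : X i ^ 2 ≤ rad X ^ 2) : |X i / rad X| ≤ 1 := by
    rw [abs_div, abs_of_nonneg hr]
    exact div_le_one_of_le₀ (abs_le_of_sq_le_sq hi hr) hr
  fin_cases α
  · simp [nullDir]
  · simpa [nullDir] using h 1 (by rw [rad_sq]; nlinarith)
  · simpa [nullDir] using h 2 (by rw [rad_sq]; nlinarith)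

theorem abs_pd_sub_nullDir_mul_le_Gamma (v : (Fin 3 → ℝ) → ℝ) (hX : 0 ≤ X 0) (hr : 0 < rad X)
    (α : Fin 3) :
    |pd α v X - nullDir X α * pd 0 v X|
      ≤ (|Γ 6 v X + 2 * v X| + |Γ 4 v X| + |Γ 5 v X| + |Γ 3 v X|) / rad X := by
  have hS : Γ 6 v X + 2 * v X = X 0 * pd 0 v X + X 1 * pd 1 v X + X 2 * pd 2 v X := by
    simp [_root_.Gamma]
  have hL₁ : Γ 4 v X = X 0 * pd 1 v X + X 1 * pd 0 v X := by simp [_root_.Gamma]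
  have hL₂ : Γ 5 v X = X 0 * pd 2 v X + X 2 * pd 0 v X := by simp [_root_.Gamma]
  have hΩ : Γ 3 v X = X 1 * pd 2 v X - X 2 * pd 1 v X := by simp [_root_.Gamma]; ring
  rw [hS, hL₁, hL₂, hΩ]
  fin_cases α
  · simp only [nullDir]; simp; positivity
  · have := abs_good_deriv_le (a := X 1) (b := X 2) hX hr (rad_sq X)
      (p₀ := pd 0 v X) (p₁ := pd 1 v X) (p₂ := pd 2 v X)
    convert this using 2
    simp [nullDir]; ring
  · have := abs_good_deriv_le (a := X 2) (b := X 1) hX hr (by rw [rad_sq]; ring)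
      (p₀ := pd 0 v X) (p₁ := pd 2 v X) (p₂ := pd 1 v X)
    convert this using 2
    · simp [nullDir]; ring
    · rw [abs_sub_comm]; ring_nf

theorem abs_Gamma_pd_le (hu : ContDiffAt ℝ 2 u X) (i : Fin 7) (ν : Fin 3) :
    |Γ i (pd ν u) X| ≤ absPd (Γ i u) X + absPd u X := by
  have h := abs_sub_abs_le_abs_sub (Γ i (pd ν u) X) (pd ν (Γ i u) X)
  rw [abs_sub_comm] at h
  linarith [abs_pd_Gamma_sub_Gamma_pd_le hu i ν, abs_pd_le (Γ i u) X ν]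

theorem abs_pd_pd_sub_nullDir_mul_le (hu : ContDiffAt ℝ 2 u X) (hX : 0 ≤ X 0)
    (hr : 0 < rad X) (μ ν : Fin 3) :
    |pd μ (pd ν u) X - nullDir X μ * pd 0 (pd ν u) X|
      ≤ 6 * (absPdGam u X + absPd u X) / rad X := by
  refine (abs_pd_sub_nullDir_mul_le_Gamma (pd ν u) hX hr μ).trans
    (div_le_div_of_nonneg_right ?_ hr.le)
  have hS : |Γ 6 (pd ν u) X + 2 * pd ν u X| ≤ |Γ 6 (pd ν u) X| + 2 * absPd u X := by
    refine (abs_add_le _ _).trans ?_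
    rw [abs_mul, abs_two]
    linarith [abs_pd_le u X ν]
  have hΓ : absPd (Γ 3 u) X + absPd (Γ 4 u) X + absPd (Γ 5 u) X + absPd (Γ 6 u) X
      ≤ absPdGam u X := by
    simp only [absPdGam, Fin.sum_univ_seven]
    linarith [absPd_nonneg (Γ 0 u) X, absPd_nonneg (Γ 1 u) X, absPd_nonneg (Γ 2 u) X]
  linarith [abs_Gamma_pd_le hu 3 ν, abs_Gamma_pd_le hu 4 ν, abs_Gamma_pd_le hu 5 ν,
    abs_Gamma_pd_le hu 6 ν, absPdGam_nonneg u X]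

def coeffNorm (N : Fin 3 → Fin 3 → Fin 3 → Fin 3 → ℝ) : ℝ :=
  ∑ α, ∑ β, ∑ μ, ∑ ν, |N α β μ ν|

theorem coeffNorm_nonneg (N : Fin 3 → Fin 3 → Fin 3 → Fin 3 → ℝ) : 0 ≤ coeffNorm N := by
  unfold coeffNorm; positivity

theorem abs_sum_coeff_mul_le (N f : Fin 3 → Fin 3 → Fin 3 → Fin 3 → ℝ) {M : ℝ}
    (hf : ∀ α β μ ν, |f α β μ ν| ≤ M) :
    |∑ α, ∑ β, ∑ μ, ∑ ν, N α β μ ν * f α β μ ν| ≤ coeffNorm N * M := by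
  simp only [coeffNorm, Finset.sum_mul]
  refine (Finset.abs_sum_le_sum_abs _ _).trans (Finset.sum_le_sum fun α _ => ?_)
  refine (Finset.abs_sum_le_sum_abs _ _).trans (Finset.sum_le_sum fun β _ => ?_)
  refine (Finset.abs_sum_le_sum_abs _ _).trans (Finset.sum_le_sum fun μ _ => ?_)
  refine (Finset.abs_sum_le_sum_abs _ _).trans (Finset.sum_le_sum fun ν _ => ?_)
  rw [abs_mul]
  exact mul_le_mul_of_nonneg_left (hf α β μ ν) (abs_nonneg _)

theorem abs_mul_mul_le {x y z X Y Z : ℝ} (hx : |x| ≤ X) (hy : |y| ≤ Y) (hz : |z| ≤ Z) :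
    |x * y * z| ≤ X * Y * Z := by
  have hX := (abs_nonneg x).trans hx
  have hY := (abs_nonneg y).trans hy
  rw [abs_mul, abs_mul]
  exact mul_le_mul (mul_le_mul hx hy (abs_nonneg _) hX) hz (abs_nonneg _) (mul_nonneg hX hY)

theorem abs_nullForm_le {N : Fin 3 → Fin 3 → Fin 3 → Fin 3 → ℝ} (hnull : NullCond N)
    {η : Fin 3 → ℝ} (hη : η 0 ^ 2 = η 1 ^ 2 + η 2 ^ 2) (hη_le : ∀ α, |η α| ≤ 1)
    {p : Fin 3 → ℝ} {H : Fin 3 → Fin 3 → ℝ} (hH : ∀ μ ν, H μ ν = H ν μ) {P G K B : ℝ}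
    (hP : ∀ α, |p α| ≤ P) (hG : ∀ α, |p α - η α * p 0| ≤ G)
    (hK : ∀ μ ν, |H μ ν| ≤ K) (hB : ∀ μ ν, |H μ ν - η μ * H 0 ν| ≤ B) :
    |∑ α, ∑ β, ∑ μ, ∑ ν, N α β μ ν * p α * p β * H μ ν|
      ≤ coeffNorm N * (2 * G * P * K + 2 * p 0 ^ 2 * B) := by
  obtain ⟨g, hpg, hg⟩ : ∃ g : Fin 3 → ℝ, (∀ α, p α = g α + η α * p 0) ∧ ∀ α, |g α| ≤ G :=
    ⟨fun α => p α - η α * p 0, fun α => by ring, hG⟩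
  obtain ⟨Q, hHQ, hQ⟩ : ∃ Q : Fin 3 → Fin 3 → ℝ,
      (∀ μ ν, H μ ν = Q μ ν + η μ * H 0 ν) ∧ ∀ μ ν, |Q μ ν| ≤ B :=
    ⟨fun μ ν => H μ ν - η μ * H 0 ν, fun μ ν => by ring, hB⟩
  have hsplit : ∀ α β μ ν, N α β μ ν * p α * p β * H μ ν
      = N α β μ ν * (g α * p β * H μ ν) + p 0 * (N α β μ ν * (η α * g β * H μ ν))
        + p 0 ^ 2 * (N α β μ ν * (η α * η β * Q μ ν))
        + p 0 ^ 2 * (N α β μ ν * (η α * η β * (η μ * Q ν 0)))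
        + p 0 ^ 2 * H 0 0 * (N α β μ ν * η α * η β * η μ * η ν) := by
    intro α β μ ν
    rw [hpg α, hpg β, hHQ μ ν, hH 0 ν, hHQ ν 0]
    ring
  simp only [hsplit, Finset.sum_add_distrib, ← Finset.mul_sum, hnull η hη, mul_zero, add_zero]
  have hηQ (μ ν : Fin 3) : |η μ * Q ν 0| ≤ B := by
    rw [abs_mul]; exact (mul_le_of_le_one_left (abs_nonneg _) (hη_le μ)).trans (hQ ν 0)
  have h₁ := abs_sum_coeff_mul_le N _ fun α β μ ν => abs_mul_mul_le (hg α) (hP β) (hK μ ν)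
  have h₂ := abs_sum_coeff_mul_le N _ fun α β μ ν => abs_mul_mul_le (hη_le α) (hg β) (hK μ ν)
  have h₃ := abs_sum_coeff_mul_le N _ fun α β μ ν => abs_mul_mul_le (hη_le α) (hη_le β) (hQ μ ν)
  have h₄ := abs_sum_coeff_mul_le N _ fun α β μ ν => abs_mul_mul_le (hη_le α) (hη_le β) (hηQ μ ν)
  generalize ∑ α, ∑ β, ∑ μ, ∑ ν, N α β μ ν * (g α * p β * H μ ν) = S₁ at h₁ ⊢
  generalize ∑ α, ∑ β, ∑ μ, ∑ ν, N α β μ ν * (η α * g β * H μ ν) = S₂ at h₂ ⊢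
  generalize ∑ α, ∑ β, ∑ μ, ∑ ν, N α β μ ν * (η α * η β * Q μ ν) = S₃ at h₃ ⊢
  generalize ∑ α, ∑ β, ∑ μ, ∑ ν, N α β μ ν * (η α * η β * (η μ * Q ν 0)) = S₄ at h₄ ⊢
  have hP₀ : 0 ≤ P := (abs_nonneg _).trans (hP 0)
  calc |S₁ + p 0 * S₂ + p 0 ^ 2 * S₃ + p 0 ^ 2 * S₄|
      ≤ |S₁| + |p 0| * |S₂| + p 0 ^ 2 * |S₃| + p 0 ^ 2 * |S₄| := by
        have := abs_add_three S₁ (p 0 * S₂) (p 0 ^ 2 * S₃)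
        have := abs_add_le (S₁ + p 0 * S₂ + p 0 ^ 2 * S₃) (p 0 ^ 2 * S₄)
        simp only [abs_mul, abs_pow, sq_abs] at *
        linarith
    _ ≤ coeffNorm N * (G * P * K) + P * (coeffNorm N * (1 * G * K))
          + p 0 ^ 2 * (coeffNorm N * (1 * 1 * B)) + p 0 ^ 2 * (coeffNorm N * (1 * 1 * B)) := by
        gcongr
        exact hP 0
    _ = coeffNorm N * (2 * G * P * K + 2 * p 0 ^ 2 * B) := by ring

theorem abs_pd_sub_nullDir_mul_le_good (v : (Fin 3 → ℝ) → ℝ) (X : Fin 3 → ℝ) (α : Fin 3) :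
    |pd α v X - nullDir X α * pd 0 v X|
      ≤ |X 1 / rad X * pd 0 v X + pd 1 v X| + |X 2 / rad X * pd 0 v X + pd 2 v X| := by
  fin_cases α
  · simp [nullDir]; positivity
  · simp [nullDir, add_comm]
  · simp [nullDir, add_comm]

end

theorem F1_pointwise_bound_general
    (N : Fin 3 → Fin 3 → Fin 3 → Fin 3 → ℝ) (hnull : NullCond N) :
    ∃ C : ℝ, 0 < C ∧
      ∀ (a : Fin 7 → ℕ) (u : (Fin 3 → ℝ) → ℝ) (s : Set (Fin 3 → ℝ)), IsOpen s →
        ContDiffOn ℝ (((∑ i, a i) + 3 : ℕ) : ℕ∞) u s →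
        ∀ X ∈ s, 0 ≤ X 0 → 1 ≤ rad X →
          |∑ α : Fin 3, ∑ β : Fin 3, ∑ μ : Fin 3, ∑ ν : Fin 3,
              N α β μ ν * pd α (GammaPow a u) X * pd β (GammaPow a u) X *
                pd μ (pd ν u) X| ≤
            C * ((|X 1 / rad X * pd 0 (GammaPow a u) X + pd 1 (GammaPow a u) X| +
                  |X 2 / rad X * pd 0 (GammaPow a u) X + pd 2 (GammaPow a u) X|) *
                    absPd (GammaPow a u) X * absPd2 u X +
                1 / rad X * (pd 0 (GammaPow a u) X) ^ 2 *
                  (absPdGam u X + absPd u X)) := by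
  refine ⟨12 * coeffNorm N + 1, by linarith [coeffNorm_nonneg N], ?_⟩
  intro a u s hs hu X hXs hX hr
  have hu₂ : ContDiffAt ℝ 2 u X := (hu.contDiffAt (hs.mem_nhds hXs)).of_le <| by
    norm_cast; exact_mod_cast (by omega : 2 ≤ ∑ i, a i + 3)
  have hr₀ : 0 < rad X := one_pos.trans_le hr
  set w := GammaPow a u
  refine (abs_nullForm_le hnull (nullDir_sq hr₀.ne') (abs_nullDir_le X) (pd_pd_comm hu₂)
    (abs_pd_le w X) (abs_pd_sub_nullDir_mul_le_good w X) (abs_pd_pd_le u X)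
    (abs_pd_pd_sub_nullDir_mul_le hu₂ hX hr₀)).trans ?_
  have hT₁ : 0 ≤ (|X 1 / rad X * pd 0 w X + pd 1 w X| + |X 2 / rad X * pd 0 w X + pd 2 w X|)
      * absPd w X * absPd2 u X :=
    mul_nonneg (mul_nonneg (by positivity) (absPd_nonneg w X)) (absPd2_nonneg u X)
  have hT₂ : 0 ≤ 1 / rad X * pd 0 w X ^ 2 * (absPdGam u X + absPd u X) := by
    have := absPdGam_nonneg u X
    have := absPd_nonneg u X
    positivity
  have hc := coeffNorm_nonneg N
  rw [show 2 * pd 0 w X ^ 2 * (6 * (absPdGam u X + absPd u X) / rad X)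
    = 12 * (1 / rad X * pd 0 w X ^ 2 * (absPdGam u X + absPd u X)) by ring]
  linarith [mul_nonneg hc hT₁, mul_nonneg hc hT₂]

/-- Lemma 3.2, bound for `F₁`: under the symmetry and null conditions,
for `|x| ≥ 1`, `F₁(u) = ∑ N_{αβμν} ∂_αΓ^a u ∂_βΓ^a u ∂_μ∂_ν u` satisfies
`|F₁(u)| ≲ ∑_{i=1,2} |(ω_i∂_t + ∂_i)Γ^a u| |∂Γ^a u| |∂²u|
  + (1/r) |∂_tΓ^a u|² (|∂Γu| + |∂u|)`. -/
theorem F1_pointwise_bound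
    (N : Fin 3 → Fin 3 → Fin 3 → Fin 3 → ℝ) (hsym : SymCond N) (hnull : NullCond N) :
    ∃ C : ℝ, 0 < C ∧
      ∀ (a : Fin 7 → ℕ) (u : (Fin 3 → ℝ) → ℝ) (s : Set (Fin 3 → ℝ)), IsOpen s →
        ContDiffOn ℝ (((∑ i, a i) + 3 : ℕ) : ℕ∞) u s →
        ∀ X ∈ s, 0 ≤ X 0 → 1 ≤ rad X →
          |∑ α : Fin 3, ∑ β : Fin 3, ∑ μ : Fin 3, ∑ ν : Fin 3,
              N α β μ ν * pd α (GammaPow a u) X * pd β (GammaPow a u) X *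
                pd μ (pd ν u) X| ≤
            C * ((|X 1 / rad X * pd 0 (GammaPow a u) X + pd 1 (GammaPow a u) X| +
                  |X 2 / rad X * pd 0 (GammaPow a u) X + pd 2 (GammaPow a u) X|) *
                    absPd (GammaPow a u) X * absPd2 u X +
                1 / rad X * (pd 0 (GammaPow a u) X) ^ 2 *
                  (absPdGam u X + absPd u X)) :=
  F1_pointwise_bound_general N hnull

end
end

section
/- Let N_{αβμν} (α,β,μ,ν∈{0,1,2}) be real coefficients satisfying the symmetry condition and the null condition. There exists a constant C>0, depending only on the coefficients, such that for every multi-index a, every sufficiently smooth (C^{|a|+4}) real-valued function u defined near a point (t,x)∈ℝ^{1+2} with t≥0 and |x|≥1, the quantity F₂(u) := Σ N_{αβμν} ∂_α Γ^a u · ∂_β Γ^a u · ∂_μ∂_ν∂_t u satisfies |F₂(u)(t,x)| ≤ C [ Σ_{i=1,2} |((ω_i∂_t+∂_i)Γ^a u)| · |∂Γ^a u| · |∂³u| + (1/|x|)·|∂_tΓ^a u|²·(|∂²Γu| + |∂²u|) ](t,x). -/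
noncomputable section

open MeasureTheory Real Set

/-- `|∂³u|` at a point: the Euclidean norm of all third-order space-time derivatives. -/
def absPd3 (u : (Fin 3 → ℝ) → ℝ) (X : Fin 3 → ℝ) : ℝ :=
  Real.sqrt (∑ i : Fin 3, ∑ j : Fin 3, ∑ l : Fin 3, (pd i (pd j (pd l u)) X) ^ 2)

/-- `|∂²Γu|` at a point: the sum over the seven fields `Γ'` of `|∂²Γ'u|`. -/
def absPd2Gam (u : (Fin 3 → ℝ) → ℝ) (X : Fin 3 → ℝ) : ℝ :=
  ∑ i : Fin 7, absPd2 (Gamma i u) X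

/-!
Split every derivative along the null covector `c = (1, -ω)`: `∂_α = c_α ∂_t + T_α`, where the
`T_i = ω_i ∂_t + ∂_i` are the good derivatives, and likewise
`∂_μ ∂_ν ∂_t u = c_μ c_ν ∂_t³ u + (terms containing a good derivative)`. The null condition kills
the pure `c ⊗ c ⊗ c ⊗ c` contribution, so every remaining term carries a good derivative. Those
falling on `Γ^a u` are kept; those falling on `∂²u` are traded for `1/r` times `Ω, L₁, L₂, S̃`
applied to `∂²u` through the identity
`r (t + r) (x₁ ∂_t + r ∂₁) = x₁ r S + x₁ (x₁ L₁ + x₂ L₂) - (t + r) x₂ Ω`,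
and `Γ ∂² u` differs from `∂² Γ u` by second derivatives of `u`, as `Γ` has linear coefficients.
-/

open Finset Filter Topology

theorem abs_mul_mul_sub_null_le {pα pβ p₀ cα cβ cμ cν H K Q P D E : ℝ}
    (hcα : |cα| ≤ 1) (hcβ : |cβ| ≤ 1) (hqα : |pα - cα * p₀| ≤ Q) (hqβ : |pβ - cβ * p₀| ≤ Q)
    (hpβ : |pβ| ≤ P) (hp₀ : |p₀| ≤ P) (hH : |H| ≤ D) (hR : |H - cμ * cν * K| ≤ E) :
    |pα * pβ * H - cα * cβ * cμ * cν * (p₀ ^ 2 * K)| ≤ 2 * Q * P * D + p₀ ^ 2 * E := by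
  have hQ : 0 ≤ Q := (abs_nonneg _).trans hqα
  have hP : 0 ≤ P := (abs_nonneg _).trans hp₀
  have h₁ : |(pα - cα * p₀) * pβ * H| ≤ Q * P * D := by
    rw [abs_mul, abs_mul]; gcongr
  have h₂ : |cα * p₀ * (pβ - cβ * p₀) * H| ≤ 1 * P * Q * D := by
    rw [abs_mul, abs_mul, abs_mul]; gcongr
  have h₃ : |cα * cβ * p₀ ^ 2 * (H - cμ * cν * K)| ≤ 1 * 1 * p₀ ^ 2 * E := by
    rw [abs_mul, abs_mul, abs_mul, abs_pow, sq_abs]; gcongr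
  have split : pα * pβ * H - cα * cβ * cμ * cν * (p₀ ^ 2 * K) =
      (pα - cα * p₀) * pβ * H + cα * p₀ * (pβ - cβ * p₀) * H
        + cα * cβ * p₀ ^ 2 * (H - cμ * cν * K) := by ring
  rw [split]
  linarith [abs_add_three ((pα - cα * p₀) * pβ * H) (cα * p₀ * (pβ - cβ * p₀) * H)
    (cα * cβ * p₀ ^ 2 * (H - cμ * cν * K))]

theorem abs_sum_nullForm_le {ι : Type*} [Fintype ι] (N : ι → ι → ι → ι → ℝ) (c p : ι → ℝ)
    (H : ι → ι → ℝ) (i₀ : ι) {K Q P D E : ℝ}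
    (hN : ∑ α, ∑ β, ∑ μ, ∑ ν, N α β μ ν * c α * c β * c μ * c ν = 0)
    (hc : ∀ α, |c α| ≤ 1) (hq : ∀ α, |p α - c α * p i₀| ≤ Q) (hp : ∀ α, |p α| ≤ P)
    (hH : ∀ μ ν, |H μ ν| ≤ D) (hR : ∀ μ ν, |H μ ν - c μ * c ν * K| ≤ E) :
    |∑ α, ∑ β, ∑ μ, ∑ ν, N α β μ ν * p α * p β * H μ ν| ≤
      (∑ α, ∑ β, ∑ μ, ∑ ν, |N α β μ ν|) * (2 * Q * P * D + p i₀ ^ 2 * E) := by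
  -- the null condition lets us subtract the pure `c ⊗ c ⊗ c ⊗ c` part
  have cancel : ∑ α, ∑ β, ∑ μ, ∑ ν, N α β μ ν * p α * p β * H μ ν =
      ∑ α, ∑ β, ∑ μ, ∑ ν, N α β μ ν *
        (p α * p β * H μ ν - c α * c β * c μ * c ν * (p i₀ ^ 2 * K)) := by
    have : ∑ α, ∑ β, ∑ μ, ∑ ν, N α β μ ν * (c α * c β * c μ * c ν * (p i₀ ^ 2 * K)) = 0 := by
      simp only [← mul_assoc, ← sum_mul, hN, zero_mul]
    simp only [mul_sub, sum_sub_distrib, this, sub_zero]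
    simp only [mul_assoc]
  rw [cancel]
  calc _ ≤ ∑ α, ∑ β, ∑ μ, ∑ ν, |N α β μ ν *
        (p α * p β * H μ ν - c α * c β * c μ * c ν * (p i₀ ^ 2 * K))| := by
        refine (abs_sum_le_sum_abs _ _).trans (sum_le_sum fun α _ => ?_)
        refine (abs_sum_le_sum_abs _ _).trans (sum_le_sum fun β _ => ?_)
        exact (abs_sum_le_sum_abs _ _).trans (sum_le_sum fun μ _ => abs_sum_le_sum_abs _ _)
    _ ≤ ∑ α, ∑ β, ∑ μ, ∑ ν, |N α β μ ν| * (2 * Q * P * D + p i₀ ^ 2 * E) := by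
        gcongr with α _ β _ μ _ ν _
        rw [abs_mul]
        exact mul_le_mul_of_nonneg_left (abs_mul_mul_sub_null_le (hc α) (hc β) (hq α) (hq β)
          (hp β) (hp i₀) (hH μ ν) (hR μ ν)) (abs_nonneg _)
    _ = _ := by simp only [sum_mul]

theorem abs_div_mul_add_le_of_sq_add_sq {t r x₁ x₂ p₀ p₁ p₂ : ℝ} (ht : 0 ≤ t) (hr : 0 < r)
    (hx : x₁ ^ 2 + x₂ ^ 2 = r ^ 2) :
    |x₁ / r * p₀ + p₁| ≤ (|-x₂ * p₁ + x₁ * p₂| + |t * p₁ + x₁ * p₀| + |t * p₂ + x₂ * p₀| +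
      |t * p₀ + x₁ * p₁ + x₂ * p₂|) / r := by
  set Ω := -x₂ * p₁ + x₁ * p₂
  set L₁ := t * p₁ + x₁ * p₀
  set L₂ := t * p₂ + x₂ * p₀
  set S := t * p₀ + x₁ * p₁ + x₂ * p₂
  have hx₁ : |x₁| ≤ r := abs_le_of_sq_le_sq (by nlinarith) hr.le
  have hx₂ : |x₂| ≤ r := abs_le_of_sq_le_sq (by nlinarith) hr.le
  have htr : 0 < r * (t + r) := by positivity
  have identity : r * (t + r) * (x₁ * p₀ + r * p₁) =
      x₁ * r * S + x₁ * x₁ * L₁ + x₁ * x₂ * L₂ - (t + r) * x₂ * Ω := by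
    linear_combination (-(t + r) * p₁ - x₁ * p₀) * hx
  have bound : r * (t + r) * |x₁ * p₀ + r * p₁| ≤ r * (t + r) * (|Ω| + |L₁| + |L₂| + |S|) := by
    rw [← abs_of_pos htr, ← abs_mul, identity, abs_of_pos htr]
    have h₁ : |x₁ * r * S| ≤ r * (t + r) * |S| := by
      rw [abs_mul, abs_mul, abs_of_pos hr]; gcongr; nlinarith
    have h₂ : |x₁ * x₁ * L₁| ≤ r * (t + r) * |L₁| := by
      rw [abs_mul, abs_mul]; gcongr; nlinarith [abs_nonneg x₁]
    have h₃ : |x₁ * x₂ * L₂| ≤ r * (t + r) * |L₂| := by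
      rw [abs_mul, abs_mul]; gcongr; nlinarith [abs_nonneg x₁, abs_nonneg x₂]
    have h₄ : |(t + r) * x₂ * Ω| ≤ (t + r) * r * |Ω| := by
      rw [abs_mul, abs_mul, abs_of_pos (by positivity : 0 < t + r)]; gcongr
    have := abs_sub (x₁ * r * S + x₁ * x₁ * L₁ + x₁ * x₂ * L₂) ((t + r) * x₂ * Ω)
    have := abs_add_three (x₁ * r * S) (x₁ * x₁ * L₁) (x₁ * x₂ * L₂)
    linarith
  rw [show x₁ / r * p₀ + p₁ = (x₁ * p₀ + r * p₁) / r by field_simp, abs_div, abs_of_pos hr]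
  gcongr
  exact le_of_mul_le_mul_left bound htr

open Finset Filter Topology

section Calculus

variable {f g w u : (Fin 3 → ℝ) → ℝ} {Y : Fin 3 → ℝ}

theorem ContDiffAt.pd {n : WithTop ℕ∞} (i : Fin 3) (hf : ContDiffAt ℝ (n + 1) f Y) :
    ContDiffAt ℝ n (pd i f) Y :=
  (hf.fderiv_right le_rfl).clm_apply contDiffAt_const

theorem pd_comm (hf : ContDiffAt ℝ 2 f Y) (i j : Fin 3) :
    pd i (pd j f) Y = pd j (pd i f) Y := by
  have hdf : DifferentiableAt ℝ (fderiv ℝ f) Y :=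
    (hf.fderiv_right (m := 1) (by norm_num)).differentiableAt (by norm_num)
  have second : ∀ k l : Fin 3,
      pd k (pd l f) Y = fderiv ℝ (fderiv ℝ f) Y (Pi.single k 1) (Pi.single l 1) := by
    intro k l
    change fderiv ℝ (fun Z => fderiv ℝ f Z (Pi.single l 1)) Y (Pi.single k 1) = _
    rw [fderiv_clm_apply hdf (differentiableAt_const _)]
    simp
  rw [second, second, hf.isSymmSndFDerivAt (by simp)]

theorem pd_congr (h : f =ᶠ[𝓝 Y] g) (i : Fin 3) : pd i f Y = pd i g Y := by
  simp only [pd, h.fderiv_eq]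

theorem pd_add_const_mul (hf : DifferentiableAt ℝ f Y) (hg : DifferentiableAt ℝ g Y)
    (i : Fin 3) (a : ℝ) : pd i (fun Z => f Z + a * g Z) Y = pd i f Y + a * pd i g Y := by
  have h : HasFDerivAt (fun Z => f Z + a * g Z) (fderiv ℝ f Y + a • fderiv ℝ g Y) Y :=
    hf.hasFDerivAt.add (hg.hasFDerivAt.const_mul a)
  simp [pd, h.fderiv]

/-- The first-order operator `∑ₗ rₗ xₗ ∂_{kₗ} + r_c`; `Ω, L₁, L₂, S̃` are of this form. -/
def linearField (r : Fin 3 → ℝ) (k : Fin 3 → Fin 3) (rc : ℝ) (w : (Fin 3 → ℝ) → ℝ) :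
    (Fin 3 → ℝ) → ℝ :=
  fun Z => ∑ l, r l * (Z l * pd (k l) w Z) + rc * w Z

variable {r : Fin 3 → ℝ} {k : Fin 3 → Fin 3} {rc : ℝ}

theorem ContDiffAt.linearField {n : WithTop ℕ∞} (hw : ContDiffAt ℝ (n + 1) w Y) :
    ContDiffAt ℝ n (linearField r k rc w) Y :=
  (ContDiffAt.sum fun l _ => contDiffAt_const.mul
    ((contDiffAt_apply ℝ ℝ l Y).mul (hw.pd (k l)))).add
    (contDiffAt_const.mul (hw.of_le le_self_add))

theorem pd_linearField (hw : ContDiffAt ℝ 2 w Y) (i : Fin 3) :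
    pd i (linearField r k rc w) Y = linearField r k rc (pd i w) Y + r i * pd (k i) w Y := by
  have hw₁ : ∀ l, DifferentiableAt ℝ (pd l w) Y := fun l =>
    (hw.pd (n := 1) l).differentiableAt (by norm_num)
  have hderiv := (HasFDerivAt.sum (u := univ) fun l _ =>
      (((hasFDerivAt_apply l Y).mul (hw₁ (k l)).hasFDerivAt).const_mul (r l))).add
      ((hw.differentiableAt (by norm_num)).hasFDerivAt.const_mul rc)
  rw [pd, (hderiv.congr_of_eventuallyEq (.of_forall fun Z => by simp [linearField])).fderiv]
  have hcomm : ∀ l, fderiv ℝ (pd (k l) w) Y (Pi.single i 1) = pd (k l) (pd i w) Y :=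
    fun l => pd_comm hw i (k l)
  simp [linearField, hcomm, sum_add_distrib, Pi.single_apply, pd]
  ring

theorem linearField_pd_pd (hu : ContDiffAt ℝ 4 u Y) (ν μ : Fin 3) :
    linearField r k rc (pd ν (pd μ u)) Y = pd ν (pd μ (linearField r k rc u)) Y
      - r ν * pd (k ν) (pd μ u) Y - r μ * pd ν (pd (k μ) u) Y := by
  have hnear : pd μ (linearField r k rc u) =ᶠ[𝓝 Y]
      fun Z => linearField r k rc (pd μ u) Z + r μ * pd (k μ) u Z :=
    (hu.eventually (by simp)).mono fun Z hZ => pd_linearField (hZ.of_le (by norm_num)) μ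
  have hμu : ContDiffAt ℝ 3 (pd μ u) Y := hu.pd μ
  rw [pd_congr hnear, pd_add_const_mul
      ((hμu.linearField (n := 2)).differentiableAt (by norm_num))
      ((hu.pd (n := 3) (k μ)).differentiableAt (by norm_num)),
    pd_linearField (hμu.of_le (by norm_num))]
  ring

end Calculus

theorem Gamma_eq_linearField {j : Fin 7} (hj : 3 ≤ j) :
    ∃ (r : Fin 3 → ℝ) (k : Fin 3 → Fin 3) (rc : ℝ),
      (∀ l, |r l| ≤ 1) ∧ ∀ w, Gamma j w = linearField r k rc w := by
  obtain rfl | rfl | rfl | rfl : j = 3 ∨ j = 4 ∨ j = 5 ∨ j = 6 := by omega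
  · exact ⟨![0, 1, -1], ![0, 2, 1], 0, by simp [Fin.forall_fin_succ], fun w => by
      funext Z; simp [_root_.Gamma, linearField, Fin.sum_univ_three]; ring⟩
  · exact ⟨![1, 1, 0], ![1, 0, 0], 0, by simp [Fin.forall_fin_succ], fun w => by
      funext Z; simp [_root_.Gamma, linearField, Fin.sum_univ_three]⟩
  · exact ⟨![1, 0, 1], ![2, 0, 0], 0, by simp [Fin.forall_fin_succ], fun w => by
      funext Z; simp [_root_.Gamma, linearField, Fin.sum_univ_three]⟩
  · exact ⟨![1, 1, 1], ![0, 1, 2], -2, by simp [Fin.forall_fin_succ], fun w => by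
      funext Z; simp [_root_.Gamma, linearField, Fin.sum_univ_three]; ring⟩

theorem abs_pd_le_absPd (w : (Fin 3 → ℝ) → ℝ) (X : Fin 3 → ℝ) (α : Fin 3) :
    |pd α w X| ≤ absPd w X := by
  apply Real.abs_le_sqrt
  fin_cases α <;> dsimp <;> simp only [pdSq] <;>
    nlinarith [sq_nonneg (pd 0 w X), sq_nonneg (pd 1 w X), sq_nonneg (pd 2 w X)]

theorem abs_pd_pd_le_absPd2 (w : (Fin 3 → ℝ) → ℝ) (X : Fin 3 → ℝ) (i j : Fin 3) :
    |pd i (pd j w) X| ≤ absPd2 w X := by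
  apply Real.abs_le_sqrt
  calc (pd i (pd j w) X) ^ 2 ≤ ∑ j', (pd i (pd j' w) X) ^ 2 :=
        single_le_sum (f := fun j' => (pd i (pd j' w) X) ^ 2) (fun _ _ => sq_nonneg _)
          (mem_univ j)
    _ ≤ _ := single_le_sum (f := fun i' => ∑ j', (pd i' (pd j' w) X) ^ 2)
        (fun _ _ => sum_nonneg fun _ _ => sq_nonneg _) (mem_univ i)

theorem abs_pd_pd_pd_le_absPd3 (w : (Fin 3 → ℝ) → ℝ) (X : Fin 3 → ℝ) (i j l : Fin 3) :
    |pd i (pd j (pd l w)) X| ≤ absPd3 w X := by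
  apply Real.abs_le_sqrt
  calc (pd i (pd j (pd l w)) X) ^ 2 ≤ ∑ l', (pd i (pd j (pd l' w)) X) ^ 2 :=
        single_le_sum (f := fun l' => (pd i (pd j (pd l' w)) X) ^ 2) (fun _ _ => sq_nonneg _)
          (mem_univ l)
    _ ≤ ∑ j', ∑ l', (pd i (pd j' (pd l' w)) X) ^ 2 :=
        single_le_sum (f := fun j' => ∑ l', (pd i (pd j' (pd l' w)) X) ^ 2)
          (fun _ _ => sum_nonneg fun _ _ => sq_nonneg _) (mem_univ j)
    _ ≤ _ := single_le_sum (f := fun i' => ∑ j', ∑ l', (pd i' (pd j' (pd l' w)) X) ^ 2)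
        (fun _ _ => sum_nonneg fun _ _ => sum_nonneg fun _ _ => sq_nonneg _) (mem_univ i)

theorem absPd2_Gamma_le_absPd2Gam (u : (Fin 3 → ℝ) → ℝ) (X : Fin 3 → ℝ) (j : Fin 7) :
    absPd2 (Gamma j u) X ≤ absPd2Gam u X :=
  single_le_sum (f := fun i => absPd2 (Gamma i u) X) (fun _ _ => Real.sqrt_nonneg _) (mem_univ j)

theorem absPd2Gam_nonneg (u : (Fin 3 → ℝ) → ℝ) (X : Fin 3 → ℝ) : 0 ≤ absPd2Gam u X :=
  sum_nonneg fun _ _ => Real.sqrt_nonneg _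

theorem abs_Gamma_pd_pd_le {u : (Fin 3 → ℝ) → ℝ} {X : Fin 3 → ℝ} (hu : ContDiffAt ℝ 4 u X)
    {j : Fin 7} (hj : 3 ≤ j) (ν μ : Fin 3) :
    |Gamma j (pd ν (pd μ u)) X| ≤ absPd2Gam u X + 2 * absPd2 u X := by
  obtain ⟨r, k, rc, hr, hΓ⟩ := Gamma_eq_linearField hj
  have hmain := abs_pd_pd_le_absPd2 (linearField r k rc u) X ν μ
  have hG := absPd2_Gamma_le_absPd2Gam u X j
  rw [hΓ] at hG
  have h₁ : |r ν * pd (k ν) (pd μ u) X| ≤ absPd2 u X := by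
    rw [abs_mul]
    exact (mul_le_of_le_one_left (abs_nonneg _) (hr ν)).trans (abs_pd_pd_le_absPd2 u X _ _)
  have h₂ : |r μ * pd ν (pd (k μ) u) X| ≤ absPd2 u X := by
    rw [abs_mul]
    exact (mul_le_of_le_one_left (abs_nonneg _) (hr μ)).trans (abs_pd_pd_le_absPd2 u X _ _)
  rw [hΓ, linearField_pd_pd hu]
  linarith [abs_sub (pd ν (pd μ (linearField r k rc u)) X - r ν * pd (k ν) (pd μ u) X)
    (r μ * pd ν (pd (k μ) u) X), abs_sub (pd ν (pd μ (linearField r k rc u)) X)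
    (r ν * pd (k ν) (pd μ u) X)]

def nullFrame (X : Fin 3 → ℝ) : Fin 3 → ℝ := ![1, -(X 1 / rad X), -(X 2 / rad X)]

section NullFrame

variable {X : Fin 3 → ℝ}

theorem nullFrame_zero : nullFrame X 0 = 1 := rfl

theorem nullFrame_one : nullFrame X 1 = -(X 1 / rad X) := rfl

theorem nullFrame_two : nullFrame X 2 = -(X 2 / rad X) := rfl

theorem sq_add_sq_eq_rad_sq (X : Fin 3 → ℝ) : X 1 ^ 2 + X 2 ^ 2 = rad X ^ 2 :=
  (Real.sq_sqrt (by positivity)).symm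

theorem abs_le_rad (X : Fin 3 → ℝ) : |X 1| ≤ rad X ∧ |X 2| ≤ rad X :=
  ⟨Real.abs_le_sqrt (by nlinarith), Real.abs_le_sqrt (by nlinarith)⟩

theorem nullFrame_sq (hr : rad X ≠ 0) :
    nullFrame X 0 ^ 2 = nullFrame X 1 ^ 2 + nullFrame X 2 ^ 2 := by
  rw [nullFrame_zero, nullFrame_one, nullFrame_two, neg_sq, neg_sq, div_pow, div_pow,
    ← add_div, sq_add_sq_eq_rad_sq, div_self (pow_ne_zero 2 hr), one_pow]

theorem abs_nullFrame_le_one (X : Fin 3 → ℝ) (μ : Fin 3) : |nullFrame X μ| ≤ 1 := by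
  have hr : 0 ≤ rad X := Real.sqrt_nonneg _
  obtain rfl | rfl | rfl : μ = 0 ∨ μ = 1 ∨ μ = 2 := by omega
  · rw [nullFrame_zero, abs_one]
  · rw [nullFrame_one, abs_neg, abs_div, abs_of_nonneg hr]
    exact div_le_one_of_le₀ (abs_le_rad X).1 hr
  · rw [nullFrame_two, abs_neg, abs_div, abs_of_nonneg hr]
    exact div_le_one_of_le₀ (abs_le_rad X).2 hr

theorem abs_pd_sub_nullFrame_mul_le (g : (Fin 3 → ℝ) → ℝ) (X : Fin 3 → ℝ) (μ : Fin 3) :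
    |pd μ g X - nullFrame X μ * pd 0 g X| ≤
      |X 1 / rad X * pd 0 g X + pd 1 g X| + |X 2 / rad X * pd 0 g X + pd 2 g X| := by
  have h₁ := abs_nonneg (X 1 / rad X * pd 0 g X + pd 1 g X)
  have h₂ := abs_nonneg (X 2 / rad X * pd 0 g X + pd 2 g X)
  obtain rfl | rfl | rfl : μ = 0 ∨ μ = 1 ∨ μ = 2 := by omega
  · rw [nullFrame_zero, one_mul, sub_self, abs_zero]
    positivity
  · rw [nullFrame_one, neg_mul, sub_neg_eq_add, add_comm]
    linarith
  · rw [nullFrame_two, neg_mul, sub_neg_eq_add, add_comm]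
    linarith

end NullFrame

section GoodDerivatives

variable {X : Fin 3 → ℝ}

theorem goodDerivs_le_Gamma (g : (Fin 3 → ℝ) → ℝ) (ht : 0 ≤ X 0) (hr : 0 < rad X) :
    |X 1 / rad X * pd 0 g X + pd 1 g X| + |X 2 / rad X * pd 0 g X + pd 2 g X| ≤
      2 * (|Gamma 3 g X| + |Gamma 4 g X| + |Gamma 5 g X| + |Gamma 6 g X| + 2 * |g X|) /
        rad X := by
  have h₁ := abs_div_mul_add_le_of_sq_add_sq (p₀ := pd 0 g X) (p₁ := pd 1 g X)
    (p₂ := pd 2 g X) ht hr (sq_add_sq_eq_rad_sq X)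
  have h₂ := abs_div_mul_add_le_of_sq_add_sq (p₀ := pd 0 g X) (p₁ := pd 2 g X)
    (p₂ := pd 1 g X) ht hr ((add_comm _ _).trans (sq_add_sq_eq_rad_sq X))
  rw [show -X 1 * pd 2 g X + X 2 * pd 1 g X = -(-X 2 * pd 1 g X + X 1 * pd 2 g X) by ring,
    abs_neg, show X 0 * pd 0 g X + X 2 * pd 2 g X + X 1 * pd 1 g X =
      X 0 * pd 0 g X + X 1 * pd 1 g X + X 2 * pd 2 g X by ring] at h₂
  have hS : |X 0 * pd 0 g X + X 1 * pd 1 g X + X 2 * pd 2 g X| ≤ |Gamma 6 g X| + 2 * |g X| := by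
    have hΓ₆ : X 0 * pd 0 g X + X 1 * pd 1 g X + X 2 * pd 2 g X = Gamma 6 g X + 2 * g X := by
      change _ = X 0 * pd 0 g X + X 1 * pd 1 g X + X 2 * pd 2 g X - 2 * g X + 2 * g X
      ring
    simpa [hΓ₆, abs_mul] using abs_add_le (Gamma 6 g X) (2 * g X)
  change _ ≤ 2 * (|-X 2 * pd 1 g X + X 1 * pd 2 g X| + |X 0 * pd 1 g X + X 1 * pd 0 g X| +
    |X 0 * pd 2 g X + X 2 * pd 0 g X| + |Gamma 6 g X| + 2 * |g X|) / rad X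
  calc _ ≤ _ := add_le_add h₁ h₂
    _ ≤ _ := by rw [← add_div]; gcongr; linarith

variable {u : (Fin 3 → ℝ) → ℝ}

theorem abs_pd_pd_pd_sub_nullFrame_mul_le (hu : ContDiffAt ℝ 4 u X) (ht : 0 ≤ X 0)
    (hr : 0 < rad X) (μ ν : Fin 3) :
    |pd μ (pd ν (pd 0 u)) X - nullFrame X μ * pd 0 (pd ν (pd 0 u)) X| ≤
      20 * (absPd2Gam u X + absPd2 u X) / rad X := by
  have hΓ : ∀ j : Fin 7, 3 ≤ j → |Gamma j (pd ν (pd 0 u)) X| ≤ absPd2Gam u X + 2 * absPd2 u X :=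
    fun j hj => abs_Gamma_pd_pd_le hu hj ν 0
  refine (abs_pd_sub_nullFrame_mul_le _ X μ).trans ((goodDerivs_le_Gamma _ ht hr).trans ?_)
  refine div_le_div_of_nonneg_right ?_ hr.le
  have hg := abs_pd_pd_le_absPd2 u X ν 0
  have h3 := hΓ 3 (by decide)
  have h4 := hΓ 4 (by decide)
  have h5 := hΓ 5 (by decide)
  have h6 := hΓ 6 (by decide)
  linarith [absPd2Gam_nonneg u X]

theorem abs_pd_pd_pd_sub_nullFrame_mul_nullFrame_le (hu : ContDiffAt ℝ 4 u X) (ht : 0 ≤ X 0)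
    (hr : 0 < rad X) (μ ν : Fin 3) :
    |pd μ (pd ν (pd 0 u)) X - nullFrame X μ * nullFrame X ν * pd 0 (pd 0 (pd 0 u)) X| ≤
      40 * (absPd2Gam u X + absPd2 u X) / rad X := by
  have hμ := abs_pd_pd_pd_sub_nullFrame_mul_le hu ht hr μ ν
  have hν := abs_pd_pd_pd_sub_nullFrame_mul_le hu ht hr ν 0
  rw [← pd_comm ((hu.pd (n := 3) 0).of_le (by norm_num)) 0 ν] at hν
  have hν' : |nullFrame X μ * (pd 0 (pd ν (pd 0 u)) X - nullFrame X ν * pd 0 (pd 0 (pd 0 u)) X)|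
      ≤ 20 * (absPd2Gam u X + absPd2 u X) / rad X := by
    rw [abs_mul]
    exact (mul_le_of_le_one_left (abs_nonneg _) (abs_nullFrame_le_one X μ)).trans hν
  calc _ = |(pd μ (pd ν (pd 0 u)) X - nullFrame X μ * pd 0 (pd ν (pd 0 u)) X) +
        nullFrame X μ * (pd 0 (pd ν (pd 0 u)) X - nullFrame X ν * pd 0 (pd 0 (pd 0 u)) X)| := by
        congr 1; ring
    _ ≤ _ := (abs_add_le _ _).trans (add_le_add hμ hν')
    _ = _ := by ring

end GoodDerivatives

theorem F2_pointwise_bound_general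
    (N : Fin 3 → Fin 3 → Fin 3 → Fin 3 → ℝ) (hnull : NullCond N) :
    ∃ C : ℝ, 0 < C ∧
      ∀ (a : Fin 7 → ℕ) (u : (Fin 3 → ℝ) → ℝ) (s : Set (Fin 3 → ℝ)), IsOpen s →
        ContDiffOn ℝ (((∑ i, a i) + 4 : ℕ) : ℕ∞) u s →
        ∀ X ∈ s, 0 ≤ X 0 → 1 ≤ rad X →
          |∑ α : Fin 3, ∑ β : Fin 3, ∑ μ : Fin 3, ∑ ν : Fin 3,
              N α β μ ν * pd α (GammaPow a u) X * pd β (GammaPow a u) X *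
                pd μ (pd ν (pd 0 u)) X| ≤
            C * ((|X 1 / rad X * pd 0 (GammaPow a u) X + pd 1 (GammaPow a u) X| +
                  |X 2 / rad X * pd 0 (GammaPow a u) X + pd 2 (GammaPow a u) X|) *
                    absPd (GammaPow a u) X * absPd3 u X +
                1 / rad X * (pd 0 (GammaPow a u) X) ^ 2 *
                  (absPd2Gam u X + absPd2 u X)) := by
  set CN := ∑ α : Fin 3, ∑ β : Fin 3, ∑ μ : Fin 3, ∑ ν : Fin 3, |N α β μ ν|
  have hCN : 0 ≤ CN := by positivity
  refine ⟨40 * CN + 1, by positivity, fun a u s hs hu X hX ht hr => ?_⟩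
  have hu4 : ContDiffAt ℝ 4 u X :=
    (hu.contDiffAt (hs.mem_nhds hX)).of_le
      (WithTop.coe_le_coe.mpr (by exact_mod_cast Nat.le_add_left 4 _))
  have hr₀ : 0 < rad X := one_pos.trans_le hr
  set v := GammaPow a u
  refine (abs_sum_nullForm_le N (nullFrame X) (fun α => pd α v X)
    (fun μ ν => pd μ (pd ν (pd 0 u)) X) 0 (hnull _ (nullFrame_sq hr₀.ne'))
    (abs_nullFrame_le_one X) (abs_pd_sub_nullFrame_mul_le v X) (abs_pd_le_absPd v X)
    (fun μ ν => abs_pd_pd_pd_le_absPd3 u X μ ν 0)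
    (abs_pd_pd_pd_sub_nullFrame_mul_nullFrame_le hu4 ht hr₀)).trans ?_
  set T₁ := (|X 1 / rad X * pd 0 v X + pd 1 v X| + |X 2 / rad X * pd 0 v X + pd 2 v X|) *
    absPd v X * absPd3 u X
  set T₂ := 1 / rad X * (pd 0 v X) ^ 2 * (absPd2Gam u X + absPd2 u X)
  have hT₁ : 0 ≤ T₁ := by
    have : 0 ≤ absPd v X := Real.sqrt_nonneg _
    have : 0 ≤ absPd3 u X := Real.sqrt_nonneg _
    positivity
  have hT₂ : 0 ≤ T₂ := by
    have := absPd2Gam_nonneg u X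
    have : 0 ≤ absPd2 u X := Real.sqrt_nonneg _
    positivity
  calc _ = CN * (2 * T₁ + 40 * T₂) := by ring
    _ ≤ (40 * CN + 1) * (T₁ + T₂) := by nlinarith

/-- Lemma 3.2, bound for `F₂`: under the symmetry and null conditions,
for `|x| ≥ 1`, `F₂(u) = ∑ N_{αβμν} ∂_αΓ^a u ∂_βΓ^a u ∂_μ∂_ν∂_t u` satisfies
`|F₂(u)| ≲ ∑_{i=1,2} |(ω_i∂_t + ∂_i)Γ^a u| |∂Γ^a u| |∂³u|
  + (1/r) |∂_tΓ^a u|² (|∂²Γu| + |∂²u|)`. -/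
theorem F2_pointwise_bound
    (N : Fin 3 → Fin 3 → Fin 3 → Fin 3 → ℝ) (hsym : SymCond N) (hnull : NullCond N) :
    ∃ C : ℝ, 0 < C ∧
      ∀ (a : Fin 7 → ℕ) (u : (Fin 3 → ℝ) → ℝ) (s : Set (Fin 3 → ℝ)), IsOpen s →
        ContDiffOn ℝ (((∑ i, a i) + 4 : ℕ) : ℕ∞) u s →
        ∀ X ∈ s, 0 ≤ X 0 → 1 ≤ rad X →
          |∑ α : Fin 3, ∑ β : Fin 3, ∑ μ : Fin 3, ∑ ν : Fin 3,
              N α β μ ν * pd α (GammaPow a u) X * pd β (GammaPow a u) X *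
                pd μ (pd ν (pd 0 u)) X| ≤
            C * ((|X 1 / rad X * pd 0 (GammaPow a u) X + pd 1 (GammaPow a u) X| +
                  |X 2 / rad X * pd 0 (GammaPow a u) X + pd 2 (GammaPow a u) X|) *
                    absPd (GammaPow a u) X * absPd3 u X +
                1 / rad X * (pd 0 (GammaPow a u) X) ^ 2 *
                  (absPd2Gam u X + absPd2 u X)) :=
  F2_pointwise_bound_general N hnull
end
end
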